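/- If y ∈ ℕ satisfies y ≥ 2 and a₁ − d ≥ C(y,2) + 1 (where C(y,2) is the binomial coefficient y choose 2), then Q ≥ 1 and n_{Q−1} ≥ y + 2 − n_Q. -/

import Mathlib

/-! The Apéry set of `S` with respect to `a₁` meets every residue class mod `a₁` at most once,
so it has at most `a₁` elements. Besides `0` it contains `B`, its elements in `[1, F]`, and `J`,
its elements in `(F, F + a₁]`. The latter are the shifts by `a₁` of the gaps in the window
`[F + 1 - a₁, F]`, while the elements of `S` in that window, together with `(Q - 1) a₁`, lie in
`I_{Q-1} ∪ I_Q`; hence `|J| ≥ a₁ + 1 - n_{Q-1} - n_Q` and `|B| + 2 ≤ n_{Q-1} + n_Q`.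

A nonzero Apéry element is a generator `aᵢ ≠ a₁` plus a smaller Apéry element. So every element
of `J` is a generator outside `B`, or the sum of a generator in `B` and an element of `B`. If
`b` generators lie in `B`, this gives `|J| ≤ d - 1 + b (|B| - b) + C(b, 2)`, which contradicts
`a₁ ≥ d + C(y, 2) + 1` as soon as `n_{Q-1} + n_Q ≤ y + 1`. If `Q = 0`, then `F < a₁` and every
integer in `(a₁, 2a₁)` is a generator, which forces `d ≥ a₁`. -/

open Finset
open scoped Pointwise

namespace Finset

variable {α : Type*} [AddCommMonoid α] [DecidableEq α]

theorem card_add_self_le (A : Finset α) : #(A + A) ≤ (#A + 1).choose 2 := by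
  have : A + A = A.sym2.image (Sym2.lift ⟨(· + ·), add_comm⟩) := by
    ext x
    simp only [mem_add, mem_image, Sym2.exists, mk_mem_sym2_iff, Sym2.lift_mk]
    grind
  rw [this, ← card_sym2]
  exact card_image_le

theorem card_add_le_of_subset {A B : Finset α} (h : A ⊆ B) :
    #(A + B) ≤ #A * #(B \ A) + (#A + 1).choose 2 := by
  calc #(A + B) = #(A + (B \ A) ∪ (A + A)) := by rw [← add_union, sdiff_union_of_subset h]
    _ ≤ #(A + (B \ A)) + #(A + A) := card_union_le _ _
    _ ≤ _ := add_le_add card_add_le (card_add_self_le A)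

theorem card_add_card_inter_le_of_subset {J G B : Finset α} (h : J ⊆ (G \ B) ∪ (B ∩ G + B)) :
    #J + #(B ∩ G) ≤ #G + #(B ∩ G) * #(B \ G) + (#(B ∩ G) + 1).choose 2 := by
  have h1 := (card_le_card h).trans (card_union_le _ _)
  have h2 := card_add_le_of_subset (inter_subset_left : B ∩ G ⊆ B)
  have h3 : #(G \ B) + #(B ∩ G) = #G := by rw [inter_comm]; exact card_sdiff_add_card_inter G B
  rw [sdiff_inter_self_left] at h2
  omega

end Finset

theorem Nat.mul_sub_add_choose_two_le {b β y : ℕ} (hb : b ≤ β) (hy : β < y) :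
    b * (β - b) + (b + 1).choose 2 + y ≤ y.choose 2 + b + 1 := by
  obtain ⟨q, rfl⟩ := Nat.exists_eq_add_of_le hb
  obtain ⟨r, rfl⟩ := Nat.exists_eq_add_of_lt hy
  have h1 := Nat.cast_choose_two ℚ (b + 1)
  have h2 := Nat.cast_choose_two ℚ (b + q + r + 1)
  have h3 := Nat.cast_choose_two ℚ (q + r)
  rw [Nat.add_sub_cancel_left]
  qify
  push_cast at h1 h2 h3 ⊢
  have : (0 : ℚ) ≤ ((q + r).choose 2 : ℕ) := Nat.cast_nonneg _
  nlinarith [mul_nonneg (Nat.cast_nonneg b : (0 : ℚ) ≤ b) (Nat.cast_nonneg r : (0 : ℚ) ≤ r)]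

/-- Membership in the Apéry set `{x ∈ S | x - m ∉ S}`, with `x - m` read in `ℤ`: the guard
`m ≤ x` keeps truncated subtraction out. -/
def IsApery (S : AddSubmonoid ℕ) (m x : ℕ) : Prop := x ∈ S ∧ ¬ (m ≤ x ∧ x - m ∈ S)

open Classical in
noncomputable def aperyIn (S : AddSubmonoid ℕ) (m : ℕ) (s : Finset ℕ) : Finset ℕ :=
  s.filter (IsApery S m)

@[simp]
theorem mem_aperyIn {S : AddSubmonoid ℕ} {m x : ℕ} {s : Finset ℕ} :
    x ∈ aperyIn S m s ↔ x ∈ s ∧ IsApery S m x := by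
  simp [aperyIn]

namespace IsApery

variable {S : AddSubmonoid ℕ} {m x z : ℕ}

theorem eq_of_modEq (hm : m ∈ S) (hx : IsApery S m x) (hz : IsApery S m z)
    (h : x ≡ z [MOD m]) : x = z := by
  wlog hxz : x ≤ z generalizing x z
  · exact (this hz hx h.symm (le_of_not_ge hxz)).symm
  obtain ⟨k, hk⟩ := (Nat.modEq_iff_dvd' hxz).mp h
  rcases k with _ | k
  · omega
  · rw [Nat.mul_succ] at hk
    refine absurd ⟨by omega, ?_⟩ hz.2
    rw [show z - m = x + k • m by rw [smul_eq_mul, mul_comm]; omega]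
    exact S.add_mem hx.1 (S.nsmul_mem hm k)

theorem card_le (hm : m ∈ S) (hm0 : 0 < m) {s : Finset ℕ} (hs : ∀ x ∈ s, IsApery S m x) :
    #s ≤ m := by
  calc #s ≤ #(range m) := card_le_card_of_injOn (· % m)
        (fun x _ => mem_coe.mpr (mem_range.mpr (Nat.mod_lt x hm0)))
        (fun x hx z hz h => eq_of_modEq hm (hs x hx) (hs z hz) h)
    _ = m := card_range m

end IsApery

section Generators

variable {ι : Type*} {a : ι → ℕ} {m x F : ℕ}

local notation "⟪a⟫" => AddSubmonoid.closure (Set.range a)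

theorem exists_sub_mem_closure_range (hx : x ∈ ⟪a⟫) (hx0 : x ≠ 0) :
    ∃ i, a i ≤ x ∧ x - a i ∈ ⟪a⟫ := by
  induction hx using AddSubmonoid.closure_induction with
  | mem y hy =>
    obtain ⟨i, rfl⟩ := hy
    exact ⟨i, le_rfl, by simp⟩
  | zero => exact absurd rfl hx0
  | add y z hy hz ihy ihz =>
    by_cases hy0 : y = 0
    · subst hy0; simpa using ihz (by simpa using hx0)
    · obtain ⟨i, hi, hiy⟩ := ihy hy0
      refine ⟨i, by omega, ?_⟩
      rw [Nat.sub_add_comm hi]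
      exact add_mem hiy hz

theorem le_of_mem_closure_range (hm : ∀ i, m ≤ a i) (hx : x ∈ ⟪a⟫) (hx0 : x ≠ 0) : m ≤ x := by
  obtain ⟨i, hi, -⟩ := exists_sub_mem_closure_range hx hx0
  exact (hm i).trans hi

theorem IsApery.exists_isApery_sub (hx : IsApery ⟪a⟫ m x) (hx0 : x ≠ 0) :
    ∃ i, a i ≤ x ∧ a i ≠ m ∧ IsApery ⟪a⟫ m (x - a i) := by
  obtain ⟨i, hi, hmem⟩ := exists_sub_mem_closure_range hx.1 hx0
  refine ⟨i, hi, fun h => hx.2 ⟨h ▸ hi, h ▸ hmem⟩, hmem, fun ⟨hmt, ht⟩ => hx.2 ⟨by omega, ?_⟩⟩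
  rw [show x - m = a i + (x - a i - m) by omega]
  exact add_mem (AddSubmonoid.subset_closure ⟨i, rfl⟩) ht

theorem isApery_of_minimal [Fintype ι] (hpos : ∀ i, 0 < a i)
    (hmin : ∀ j, ¬ ∃ c : ι → ℕ, c j = 0 ∧ a j = ∑ i, c i * a i) {i j : ι} (hij : i ≠ j) :
    IsApery ⟪a⟫ (a j) (a i) := by
  classical
  refine ⟨AddSubmonoid.subset_closure ⟨i, rfl⟩, fun ⟨hji, hmem⟩ => ?_⟩
  obtain ⟨c, hc⟩ := AddSubmonoid.mem_closure_range_iff_of_fintype.mp hmem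
  simp only [smul_eq_mul] at hc
  by_cases hci : c i = 0
  · refine hmin i ⟨c + Pi.single j 1, by simp [hci, hij], ?_⟩
    simp only [Pi.add_apply, add_mul, sum_add_distrib, ← hc]
    simp [Pi.single_apply]
    omega
  · have : c i * a i ≤ ∑ k, c k * a k :=
      single_le_sum (f := fun k => c k * a k) (fun k _ => Nat.zero_le _) (mem_univ i)
    have : a i ≤ c i * a i := Nat.le_mul_of_pos_left _ (Nat.pos_of_ne_zero hci)
    have := hpos j
    omega

variable [Fintype ι]

theorem Ioo_subset_erase_image_of_lt (hm : ∀ i, m ≤ a i) (hF : ∀ x, F < x → x ∈ ⟪a⟫)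
    (hFm : F < m) : Ioo m (2 * m) ⊆ (univ.image a).erase m := by
  intro x hx
  rw [mem_Ioo] at hx
  have hap : IsApery ⟪a⟫ m x := ⟨hF x (by omega), fun ⟨_, hmem⟩ =>
    absurd (le_of_mem_closure_range hm hmem (by omega)) (by omega)⟩
  obtain ⟨i, hix, him, ht⟩ := hap.exists_isApery_sub (by omega)
  have hxi : x = a i := by
    by_contra hne
    have := le_of_mem_closure_range hm ht.1 (by omega)
    have := hm i
    omega
  exact mem_erase.mpr ⟨hxi ▸ him, mem_image.mpr ⟨i, mem_univ i, hxi.symm⟩⟩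

theorem aperyIn_Ioc_subset (hm : ∀ i, m ≤ a i) (hgen : ∀ i, a i ≠ m → IsApery ⟪a⟫ m (a i)) :
    aperyIn ⟪a⟫ m (Ioc F (F + m)) ⊆
      ((univ.image a).erase m \ aperyIn ⟪a⟫ m (Icc 1 F)) ∪
        (aperyIn ⟪a⟫ m (Icc 1 F) ∩ (univ.image a).erase m + aperyIn ⟪a⟫ m (Icc 1 F)) := by
  intro x hx
  obtain ⟨hxI, hap⟩ := mem_aperyIn.mp hx
  rw [mem_Ioc] at hxI
  obtain ⟨i, hix, him, ht⟩ := hap.exists_isApery_sub (by omega)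
  have hgi : a i ∈ (univ.image a).erase m := mem_erase.mpr ⟨him, mem_image_of_mem a (mem_univ i)⟩
  by_cases ht0 : x - a i = 0
  · have hxi : x = a i := by omega
    refine mem_union_left _ (mem_sdiff.mpr ⟨hxi ▸ hgi, fun hB => ?_⟩)
    have := (mem_Icc.mp (mem_aperyIn.mp hB).1).2
    omega
  · have hmt := le_of_mem_closure_range hm ht.1 ht0
    have hmi : m < a i := lt_of_le_of_ne (hm i) (Ne.symm him)
    refine mem_union_right _ (Nat.add_sub_of_le hix ▸ add_mem_add (mem_inter.mpr ⟨?_, hgi⟩) ?_)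
    · exact mem_aperyIn.mpr ⟨mem_Icc.mpr ⟨by omega, by omega⟩, hgen i him⟩
    · exact mem_aperyIn.mpr ⟨mem_Icc.mpr ⟨by omega, by omega⟩, ht⟩

end Generators

section Counting

variable {S : AddSubmonoid ℕ} {m F : ℕ}

theorem card_add_card_aperyIn_le (hm : m ∈ S) (hm0 : 0 < m) :
    #(aperyIn S m (Icc 1 F)) + #(aperyIn S m (Ioc F (F + m))) + 1 ≤ m := by
  have hdisj : Disjoint (aperyIn S m (Icc 1 F)) (aperyIn S m (Ioc F (F + m))) :=
    disjoint_left.mpr fun x hB hJ =>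
      absurd (mem_Icc.mp (mem_aperyIn.mp hB).1).2 (not_le.mpr (mem_Ioc.mp (mem_aperyIn.mp hJ).1).1)
  have h0 : 0 ∉ aperyIn S m (Icc 1 F) ∪ aperyIn S m (Ioc F (F + m)) := by simp
  rw [← card_union_of_disjoint hdisj, ← card_insert_of_notMem h0]
  refine IsApery.card_le hm hm0 fun x hx => ?_
  rcases mem_insert.mp hx with rfl | hx
  · exact ⟨S.zero_mem, fun h => by omega⟩
  · rcases mem_union.mp hx with hx | hx <;> exact (mem_aperyIn.mp hx).2

theorem card_filter_mem_add_card_aperyIn [DecidablePred (· ∈ S)] (hF : ∀ x, F < x → x ∈ S)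
    (hmF : m ≤ F + 1) :
    #((Icc (F + 1 - m) F).filter (· ∈ S)) + #(aperyIn S m (Ioc F (F + m))) = m := by
  have : aperyIn S m (Ioc F (F + m)) = ((Icc (F + 1 - m) F).filter (· ∉ S)).image (· + m) := by
    ext x
    simp only [mem_aperyIn, mem_Ioc, mem_image, mem_filter, mem_Icc, IsApery]
    constructor
    · rintro ⟨hx, -, hxm⟩
      exact ⟨x - m, ⟨⟨by omega, by omega⟩, fun h => hxm ⟨by omega, h⟩⟩, by omega⟩
    · rintro ⟨z, ⟨hz, hzS⟩, rfl⟩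
      exact ⟨⟨by omega, by omega⟩, hF _ (by omega), by simpa using hzS⟩
  rw [this, card_image_of_injective _ (add_left_injective m), card_filter_add_card_filter_not,
    Nat.card_Icc]
  omega

theorem add_one_le_card_aperyIn_add_ncard (hm : m ∈ S) (hF : ∀ x, F < x → x ∈ S) {k R : ℕ}
    (hFk : F + 1 = (k + 1) * m + R) (hR : 1 ≤ R) (hRm : R ≤ m) :
    m + 1 ≤ #(aperyIn S m (Ioc F (F + m))) +
      ((S : Set ℕ) ∩ Set.Icc 0 F ∩ Set.Icc (k * m) ((k + 1) * m - 1)).ncard +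
      ((S : Set ℕ) ∩ Set.Icc 0 F ∩ Set.Icc ((k + 1) * m) ((k + 1 + 1) * m - 1)).ncard := by
  classical
  have h1 : (k + 1) * m = k * m + m := by ring
  have h2 : (k + 1 + 1) * m = k * m + m + m := by ring
  have hJ := card_filter_mem_add_card_aperyIn hF (m := m) (by rw [h1] at hFk; omega)
  set W := (Icc (F + 1 - m) F).filter (· ∈ S)
  have hW : ↑(insert (k * m) W) ⊆
      ((S : Set ℕ) ∩ Set.Icc 0 F ∩ Set.Icc (k * m) ((k + 1) * m - 1)) ∪
        ((S : Set ℕ) ∩ Set.Icc 0 F ∩ Set.Icc ((k + 1) * m) ((k + 1 + 1) * m - 1)) := by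
    intro x hx
    simp only [coe_insert, Set.mem_insert_iff, mem_coe, W, mem_filter, mem_Icc] at hx
    simp only [Set.mem_union, Set.mem_inter_iff, SetLike.mem_coe, Set.mem_Icc, h1, h2]
    rw [h1] at hFk
    rcases hx with rfl | ⟨hx, hxS⟩
    · exact Or.inl ⟨⟨by simpa using S.nsmul_mem hm k, by omega⟩, by omega⟩
    · by_cases hxk : x ≤ k * m + m - 1
      · exact Or.inl ⟨⟨hxS, by omega⟩, by omega, hxk⟩
      · exact Or.inr ⟨⟨hxS, by omega⟩, by omega, by omega⟩
  have hfin : ((S : Set ℕ) ∩ Set.Icc 0 F ∩ Set.Icc (k * m) ((k + 1) * m - 1) ∪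
      (S : Set ℕ) ∩ Set.Icc 0 F ∩ Set.Icc ((k + 1) * m) ((k + 1 + 1) * m - 1)).Finite :=
    (Set.finite_Icc 0 F).subset (by intro x; simp only [Set.mem_union, Set.mem_inter_iff]; tauto)
  have hcard := (Set.ncard_le_ncard hW hfin).trans (Set.ncard_union_le _ _)
  rw [Set.ncard_coe_finset, card_insert_of_notMem (by simp [W, h1] at hFk ⊢; omega)] at hcard
  omega

end Counting

theorem stmt9
    (d : ℕ) (hd : 2 ≤ d)
    (a : Fin d → ℕ)
    (ha_pos : ∀ i, 0 < a i)
    (ha_mono : StrictMono a)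
    (a1 : ℕ) (ha1 : a1 = a ⟨0, by omega⟩)
    (S : Set ℕ)
    (hS : S = {m : ℕ | ∃ c : Fin d → ℕ, m = ∑ i, c i * a i})
    (hmin : ∀ j : Fin d, ¬ ∃ c : Fin d → ℕ, c j = 0 ∧ a j = ∑ i, c i * a i)
    (F : ℕ) (hFmax : ∀ m : ℕ, F < m → m ∈ S)
    (Q R : ℕ) (hQR : F + 1 = Q * a1 + R) (hR2 : 2 ≤ R) (hRa : R ≤ a1)
    (I : ℕ → Set ℕ) (hI : ∀ k, I k = Set.Icc (k * a1) ((k + 1) * a1 - 1))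
    (n : ℕ → ℕ) (hn : ∀ k, n k = (S ∩ Set.Icc 0 F ∩ I k).ncard)
    (y : ℕ) (hy : 2 ≤ y) (hyd : y.choose 2 + 1 ≤ a1 - d)
    :
    1 ≤ Q ∧ (y : ℤ) + 2 - (n Q : ℤ) ≤ (n (Q - 1) : ℤ) := by
  obtain rfl : S = AddSubmonoid.closure (Set.range a) := by
    ext x; simp [hS, AddSubmonoid.mem_closure_range_iff_of_fintype]
  have ha_le : ∀ i, a1 ≤ a i := fun i => ha1 ▸ ha_mono.monotone (Nat.zero_le i.val)
  have ha1S : a1 ∈ AddSubmonoid.closure (Set.range a) := ha1 ▸ AddSubmonoid.subset_closure ⟨_, rfl⟩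
  have hgen : ∀ i, a i ≠ a1 → IsApery (AddSubmonoid.closure (Set.range a)) a1 (a i) :=
    fun i hi => ha1 ▸ isApery_of_minimal ha_pos hmin fun h => hi (h ▸ ha1.symm)
  have hgens : #((univ.image a).erase a1) + 1 ≤ d := by
    rw [ha1, card_erase_add_one (mem_image_of_mem a (mem_univ _))]
    simpa using card_image_le (s := univ) (f := a)
  have ha1_ge : d + y.choose 2 + 1 ≤ a1 := by have := Nat.choose_pos (k := 2) hy; omega
  have hQ : 1 ≤ Q := by
    by_contra hQ0
    have := card_le_card (Ioo_subset_erase_image_of_lt ha_le hFmax (F := F) (by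
      rw [show Q = 0 by omega] at hQR; omega))
    rw [Nat.card_Ioo] at this
    omega
  refine ⟨hQ, ?_⟩
  obtain ⟨k, rfl⟩ := Nat.exists_eq_add_of_le' hQ
  have hwindow := add_one_le_card_aperyIn_add_ncard ha1S hFmax hQR (by omega) hRa
  rw [← hI, ← hI, ← hn, ← hn] at hwindow
  have hapery := card_add_card_aperyIn_le ha1S (F := F) (by omega)
  have hsums := card_add_card_inter_le_of_subset (aperyIn_Ioc_subset (F := F) ha_le hgen)
  set B := aperyIn (AddSubmonoid.closure (Set.range a)) a1 (Icc 1 F)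
  set G := (univ.image a).erase a1
  have hBG : #(B ∩ G) ≤ #B := card_le_card inter_subset_left
  rw [show #(B \ G) = #B - #(B ∩ G) by have := card_sdiff_add_card_inter B G; omega] at hsums
  rw [Nat.add_sub_cancel]
  by_contra hcon
  have := Nat.mul_sub_add_choose_two_le hBG (y := y) (by omega)
  omega
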